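/- Let f : Y → X be a morphism of schemes with X = Spec R affine. Then the composite functor f^* ∘ (−)~ : Mod R → Qcoh Y (sheafification followed by pullback) is naturally isomorphic to − ⊗_R O_Y, where O_Y is given a left R-module structure via the ring homomorphism R → Hom_Y(O_Y, O_Y) obtained from R → Hom_R(R, R) (multiplication), applying f^* ∘ (−)~, and the natural isomorphism f^* O_X ≅ O_Y. -/

import Mathlib

/-!
For `F = f^* ∘ (-)~` and `L = 𝒪_Y`, the comparison `T ⟶ F` is the adjoint of
`M ⟶ Hom(L, F M)`, `m ↦ e⁻¹ ≫ F(t ↦ t • m)`. At `M = R` it is an isomorphism, because `ξ`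
identifies `Hom(T R, -)` with `Hom(L, -)` and `e` identifies `Hom(F R, -)` with `Hom(L, -)`,
compatibly with the comparison. Both functors are right exact and preserve coproducts, and every
module is the cokernel of a map between free modules, so the comparison is an isomorphism
everywhere.
-/

open CategoryTheory CategoryTheory.Limits MulOpposite

universe u

section Preamble

variable (k : Type*) [CommRing k] (R : Type u) [Ring R] [Algebra k R]
variable (A : Type*) [Category.{u} A] [Preadditive A] [CategoryTheory.Linear k A]

/-- A left `R`-module in the `k`-linear category `A`: an object together with a
ring homomorphism `ρ : R → End 𝓕` which is `k`-linear, i.e. a `k`-algebra homomorphism. -/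
structure LMod where
  X : A
  ρ : R →+* End X
  algebraMap_smul' : ∀ a : k, ρ (algebraMap k R a) = a • (𝟙 X)

variable {k R A}

/-- the `k`-module structure on right `R`-modules obtained by restriction of scalars -/
noncomputable instance (M : ModuleCat.{u} Rᵐᵒᵖ) : Module k M :=
  RestrictScalars.module k Rᵐᵒᵖ M

instance (M : ModuleCat.{u} Rᵐᵒᵖ) : IsScalarTower k Rᵐᵒᵖ M :=
  RestrictScalars.isScalarTower k Rᵐᵒᵖ M

/-- The `k`-linear structure on the category of right `R`-modules, `a • m = m · γ(a)`. -/
noncomputable instance : CategoryTheory.Linear k (ModuleCat.{u} Rᵐᵒᵖ) where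
  homModule _ _ := ModuleCat.Hom.instModule
  smul_comp := by
    intros
    ext
    simp

/-- `Hom_A(𝓕, N)` is a right `R`-module via `α · r := ρ(r) ≫ α`. -/
instance homRMod (F : LMod k R A) (N : A) : Module Rᵐᵒᵖ (F.X ⟶ N) where
  smul r α := F.ρ r.unop ≫ α
  one_smul α := by show F.ρ _ ≫ α = α; simp
  mul_smul r s α := by
    show F.ρ _ ≫ α = F.ρ _ ≫ F.ρ _ ≫ α
    rw [unop_mul, map_mul, End.mul_def, Category.assoc]
  smul_zero r := by show _ ≫ (0 : F.X ⟶ N) = 0; simp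
  smul_add r α β := by show _ ≫ (α + β) = _ ≫ α + _ ≫ β; simp
  add_smul r s α := by
    show F.ρ _ ≫ α = F.ρ _ ≫ α + F.ρ _ ≫ α
    rw [MulOpposite.unop_add, map_add]; exact Preadditive.add_comp _ _ _ _ _ _
  zero_smul α := by show F.ρ _ ≫ α = 0; rw [MulOpposite.unop_zero, map_zero]; exact Limits.zero_comp

lemma homRMod_smul_def (F : LMod k R A) {N : A} (r : Rᵐᵒᵖ) (α : F.X ⟶ N) :
    r • α = F.ρ r.unop ≫ α := rfl

/-- The functor `Hom_A(𝓕, -) : A ⥤ Mod R`. -/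
noncomputable def homFunctor (F : LMod k R A) : A ⥤ ModuleCat.{u} Rᵐᵒᵖ where
  obj N := ModuleCat.of Rᵐᵒᵖ (F.X ⟶ N)
  map {N N'} f := ModuleCat.ofHom
    { toFun := fun α => α ≫ f
      map_add' := fun α β => Preadditive.add_comp _ _ _ _ _ _
      map_smul' := fun r α => by
        show (F.ρ r.unop ≫ α) ≫ f = F.ρ r.unop ≫ (α ≫ f)
        rw [Category.assoc] }
  map_id N := by ext α; exact Category.comp_id α
  map_comp f g := by ext α; exact (Category.assoc _ _ _).symm

/-- `R` as a right module over itself. -/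
noncomputable abbrev RR : ModuleCat.{u} Rᵐᵒᵖ := ModuleCat.of Rᵐᵒᵖ Rᵐᵒᵖ

variable (R) in
/-- left multiplication `μ_x` by `x` on `R`, a right `R`-module map -/
def mulMap (x : R) : (RR : ModuleCat.{u} Rᵐᵒᵖ) ⟶ RR := ModuleCat.ofHom {
  toFun r := op (x * r.unop)
  map_add' r s := by
    apply unop_injective
    show x * (r + s).unop = _
    rw [show (r + s).unop = r.unop + s.unop from rfl, mul_add]; rfl
  map_smul' s t := by
    apply unop_injective
    show x * (s • t).unop = ((s • op (x * t.unop)).unop)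
    rw [show (s • t).unop = t.unop * s.unop from rfl,
      show (s • op (x * t.unop)).unop = (x * t.unop) * s.unop from rfl, mul_assoc] }

/-- Morphisms `𝓕 → 𝓖` of left `R`-modules in `A` induce natural transformations
`Hom_A(𝓖,-) ⟶ Hom_A(𝓕,-)`. -/
noncomputable def homPre {F G : LMod k R A} (φ : F.X ⟶ G.X)
    (h : ∀ r : R, F.ρ r ≫ φ = φ ≫ G.ρ r) : homFunctor G ⟶ homFunctor F where
  app N := ModuleCat.ofHom
    { toFun := fun α => φ ≫ α
      map_add' := fun α β => Preadditive.comp_add _ _ _ _ _ _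
      map_smul' := fun r α => by
        show φ ≫ G.ρ r.unop ≫ α = F.ρ r.unop ≫ φ ≫ α
        rw [← Category.assoc, ← h, Category.assoc] }
  naturality N N' f := by ext α; exact (Category.assoc _ _ _).symm

/-- `M ⊗ φ` : the natural transformation `- ⊗_R 𝓕 ⟶ - ⊗_R 𝓖` induced by `φ : 𝓕 ⟶ 𝓖`,
obtained as the conjugate (mate) of `homPre φ`. -/
noncomputable def tensorMap {F G : LMod k R A} {TF TG : ModuleCat.{u} Rᵐᵒᵖ ⥤ A}
    (adjF : TF ⊣ homFunctor F) (adjG : TG ⊣ homFunctor G) (φ : F.X ⟶ G.X)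
    (h : ∀ r : R, F.ρ r ≫ φ = φ ≫ G.ρ r) : TF ⟶ TG :=
  (conjugateEquiv adjG adjF).symm (homPre φ h)

/-- The canonical map `ξ_𝓕 : 𝓕 ⟶ R ⊗_R 𝓕`. -/
noncomputable def xi {F : LMod k R A} {TF : ModuleCat.{u} Rᵐᵒᵖ ⥤ A}
    (adjF : TF ⊣ homFunctor F) : F.X ⟶ TF.obj RR :=
  (adjF.unit.app RR) (1 : Rᵐᵒᵖ)

end Preamble

open AlgebraicGeometry

/-- The category of quasi-coherent sheaves on a scheme. -/
abbrev QCoh (X : Scheme.{u}) :=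
  CategoryTheory.ObjectProperty.FullSubcategory (fun M : X.Modules => SheafOfModules.IsQuasicoherent M)

section EpiCover

variable {C D : Type*} [Category C] [Abelian C] [Category D] {G H : C ⥤ D}
  [PreservesFiniteColimits G] [PreservesFiniteColimits H]

lemma isIso_app_of_exists_epi (θ : G ⟶ H)
    (h : ∀ X : C, ∃ (Y : C) (p : Y ⟶ X), Epi p ∧ IsIso (θ.app Y)) (X : C) :
    IsIso (θ.app X) := by
  obtain ⟨Y, p, hp, hY⟩ := h X
  obtain ⟨Y', q, hq, hY'⟩ := h (kernel p)
  -- `X` is the cokernel of `Y' ⟶ ker p ⟶ Y`, a colimit that `G` and `H` preserve.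
  have hX : IsColimit (CokernelCofork.ofπ p (by simp : (q ≫ kernel.ι p) ≫ p = 0)) :=
    isCokernelEpiComp (Abelian.epiIsCokernelOfKernel _ (kernelIsKernel p)) q rfl
  have : IsIso (Functor.whiskerLeft (parallelPair (q ≫ kernel.ι p) 0) θ) :=
    have (j : WalkingParallelPair) :
        IsIso ((Functor.whiskerLeft (parallelPair (q ≫ kernel.ι p) 0) θ).app j) := by
      cases j <;> assumption
    NatIso.isIso_of_isIso_app _
  exact isIso_app_coconePt_of_preservesColimit _ θ _ hX

end EpiCover

section SpanSingleton

variable {R : Type u} [Ring R]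

noncomputable abbrev toSpanSingletonHom (M : ModuleCat.{u} Rᵐᵒᵖ) (m : M) :
    (RR : ModuleCat.{u} Rᵐᵒᵖ) ⟶ M :=
  ModuleCat.ofHom (LinearMap.toSpanSingleton Rᵐᵒᵖ M m)

lemma toSpanSingletonHom_comp {M M' : ModuleCat.{u} Rᵐᵒᵖ} (g : M ⟶ M') (m : M) :
    toSpanSingletonHom M m ≫ g = toSpanSingletonHom M' (g m) := by
  ext
  simp

lemma toSpanSingletonHom_one :
    toSpanSingletonHom (RR : ModuleCat.{u} Rᵐᵒᵖ) (1 : Rᵐᵒᵖ) = 𝟙 _ := by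
  ext
  simp

lemma toSpanSingletonHom_add (M : ModuleCat.{u} Rᵐᵒᵖ) (m m' : M) :
    toSpanSingletonHom M (m + m') = toSpanSingletonHom M m + toSpanSingletonHom M m' := by
  ext
  simp

lemma toSpanSingletonHom_smul (M : ModuleCat.{u} Rᵐᵒᵖ) (s : Rᵐᵒᵖ) (m : M) :
    toSpanSingletonHom M (s • m) = mulMap R s.unop ≫ toSpanSingletonHom M m := by
  ext
  change (1 : Rᵐᵒᵖ) • s • m = op (unop s * unop 1) • m
  simp

lemma bijective_eval_one (M : ModuleCat.{u} Rᵐᵒᵖ) :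
    Function.Bijective fun φ : (RR : ModuleCat.{u} Rᵐᵒᵖ) ⟶ M => φ (1 : Rᵐᵒᵖ) :=
  (LinearMap.ringLmapEquivSelf Rᵐᵒᵖ ℕ M).bijective.comp ModuleCat.homEquiv.bijective

lemma epi_sigmaDesc_toSpanSingletonHom (M : ModuleCat.{u} Rᵐᵒᵖ) :
    Epi (Sigma.desc (toSpanSingletonHom M)) := by
  rw [ModuleCat.epi_iff_surjective]
  intro m
  refine ⟨Sigma.ι (fun _ : M => (RR : ModuleCat.{u} Rᵐᵒᵖ)) m (1 : Rᵐᵒᵖ), ?_⟩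
  rw [← ConcreteCategory.comp_apply, Sigma.ι_desc]
  exact one_smul _ m

lemma isIso_of_isIso_app_RR {B : Type*} [Category B] {G H : ModuleCat.{u} Rᵐᵒᵖ ⥤ B}
    [PreservesFiniteColimits G] [PreservesFiniteColimits H]
    [∀ ι : Type u, PreservesColimitsOfShape (Discrete ι) G]
    [∀ ι : Type u, PreservesColimitsOfShape (Discrete ι) H]
    (θ : G ⟶ H) [IsIso (θ.app RR)] : IsIso θ := by
  have hfree (ι : Type u) : IsIso (θ.app (∐ fun _ : ι => (RR : ModuleCat.{u} Rᵐᵒᵖ))) := by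
    have (j : Discrete ι) :
        IsIso ((Functor.whiskerLeft (Discrete.functor fun _ : ι => RR) θ).app j) :=
      inferInstanceAs (IsIso (θ.app RR))
    have : IsIso (Functor.whiskerLeft (Discrete.functor fun _ : ι => RR) θ) :=
      NatIso.isIso_of_isIso_app _
    exact isIso_app_coconePt_of_preservesColimit _ θ _ (colimit.isColimit _)
  have : ∀ M, IsIso (θ.app M) := isIso_app_of_exists_epi θ fun M =>
    ⟨_, _, epi_sigmaDesc_toSpanSingletonHom M, hfree M⟩
  exact NatIso.isIso_of_isIso_app θ

end SpanSingleton

section Watts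

variable {k : Type*} [CommRing k] {R : Type u} [Ring R] [Algebra k R]
  {A : Type*} [Category.{u} A] [Preadditive A] [CategoryTheory.Linear k A]
  {L : LMod k R A} {T : ModuleCat.{u} Rᵐᵒᵖ ⥤ A}

lemma xi_comp (adj : T ⊣ homFunctor L) {N : A} (β : T.obj RR ⟶ N) :
    xi adj ≫ β = adj.homEquiv RR N β (1 : Rᵐᵒᵖ) := by
  rw [Adjunction.homEquiv_unit]
  rfl

lemma bijective_xi_comp (adj : T ⊣ homFunctor L) (N : A) :
    Function.Bijective fun β : T.obj RR ⟶ N => xi adj ≫ β := by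
  simp only [xi_comp]
  exact (bijective_eval_one _).comp (adj.homEquiv RR N).bijective

variable (F : ModuleCat.{u} Rᵐᵒᵖ ⥤ A) [F.Additive] (e : F.obj RR ≅ L.X)
  (hρ : ∀ x : R, L.ρ x = e.inv ≫ F.map (mulMap R x) ≫ e.hom)

noncomputable def homComparison (M : ModuleCat.{u} Rᵐᵒᵖ) :
    M ⟶ (homFunctor L).obj (F.obj M) := ModuleCat.ofHom {
  toFun m := e.inv ≫ F.map (toSpanSingletonHom M m)
  map_add' m m' := by
    simp only [toSpanSingletonHom_add, F.map_add, Preadditive.comp_add]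
  map_smul' s m := by
    change _ = L.ρ s.unop ≫ _
    simp only [hρ, toSpanSingletonHom_smul, F.map_comp, Category.assoc, Iso.hom_inv_id_assoc] }

lemma homComparison_apply (M : ModuleCat.{u} Rᵐᵒᵖ) (m : M) :
    homComparison F e hρ M m = e.inv ≫ F.map (toSpanSingletonHom M m) := rfl

lemma homComparison_naturality {M M' : ModuleCat.{u} Rᵐᵒᵖ} (g : M ⟶ M') :
    g ≫ homComparison F e hρ M' = homComparison F e hρ M ≫ (homFunctor L).map (F.map g) := by
  ext m
  change e.inv ≫ F.map (toSpanSingletonHom M' (g m)) = (e.inv ≫ F.map _) ≫ F.map g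
  rw [← toSpanSingletonHom_comp, F.map_comp, Category.assoc]

noncomputable def wattsComparison (adj : T ⊣ homFunctor L) : T ⟶ F where
  app M := (adj.homEquiv M (F.obj M)).symm (homComparison F e hρ M)
  naturality {M M'} g := by
    rw [← Adjunction.homEquiv_naturality_left_symm, homComparison_naturality,
      Adjunction.homEquiv_naturality_right_symm]

lemma xi_comp_wattsComparison_app (adj : T ⊣ homFunctor L) :
    xi adj ≫ (wattsComparison F e hρ adj).app RR = e.inv := by
  rw [xi_comp, wattsComparison, Equiv.apply_symm_apply, homComparison_apply,
    toSpanSingletonHom_one, F.map_id, Category.comp_id]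

instance isIso_wattsComparison_app_RR (adj : T ⊣ homFunctor L) :
    IsIso ((wattsComparison F e hρ adj).app RR) := by
  refine isIso_of_coyoneda_map_bijective _ fun N => ?_
  have hcomp : (fun β => xi adj ≫ β) ∘ (fun β => (wattsComparison F e hρ adj).app RR ≫ β) =
      e.homFromEquiv (Z := N) := by
    funext β
    simp only [Function.comp_apply, Iso.homFromEquiv_apply, ← Category.assoc,
      xi_comp_wattsComparison_app]
  rw [← (bijective_xi_comp adj N).of_comp_iff', hcomp]
  exact Equiv.bijective _

noncomputable def wattsIso [PreservesFiniteColimits F]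
    [∀ ι : Type u, PreservesColimitsOfShape (Discrete ι) F] (adj : T ⊣ homFunctor L) : T ≅ F :=
  have := adj.leftAdjoint_preservesColimits
  have := isIso_of_isIso_app_RR (wattsComparison F e hρ adj)
  asIso (wattsComparison F e hρ adj)

end Watts

/-- **Watts's theorem for an affine source** (the Example of §4).  Let `X = Spec R` be
affine and `f : Y ⟶ X` a morphism of schemes.  Let `tilde : Mod R ⥤ Qcoh X` be the
(quasi-inverse to global sections) equivalence and `fstar : Qcoh X ⥤ Qcoh Y` the
pullback functor along `f`, so `F = f^* ∘ (-)~ : Mod R ⥤ Qcoh Y` is right exact and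
commutes with direct sums.  Then `F ≅ - ⊗_R 𝒪_Y`, where `𝒪_Y` (the structure sheaf,
i.e. the unit sheaf of modules) is an `R`-module object via
`ρ(x) = e⁻¹ ∘ F(μ_x) ∘ e` for the canonical isomorphism `e : F(R) = f^* 𝒪_X ≅ 𝒪_Y`,
and `- ⊗_R 𝒪_Y` is any left adjoint of `Hom_Y(𝒪_Y, -) : Qcoh Y ⥤ Mod R`. -/
theorem watts_affine_pullback
    (R : Type u) [CommRing R]
    (Y : Scheme.{u}) (f : Y ⟶ Spec (CommRingCat.of R))
    (tilde : ModuleCat.{u} Rᵐᵒᵖ ⥤ QCoh (Spec (CommRingCat.of R)))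
    (htilde : tilde.IsEquivalence)
    (fstar : QCoh (Spec (CommRingCat.of R)) ⥤ QCoh Y)
    [(tilde ⋙ fstar).Additive]
    [PreservesFiniteColimits (tilde ⋙ fstar)]
    [∀ ι : Type u, PreservesColimitsOfShape (Discrete ι) (tilde ⋙ fstar)]
    (hO : SheafOfModules.IsQuasicoherent (R := Y.ringCatSheaf) (SheafOfModules.unit Y.ringCatSheaf))
    (e : (tilde ⋙ fstar).obj (RR : ModuleCat.{u} Rᵐᵒᵖ) ≅
      (⟨SheafOfModules.unit Y.ringCatSheaf, hO⟩ : QCoh Y))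
    (ρ : R →+* End (⟨SheafOfModules.unit Y.ringCatSheaf, hO⟩ : QCoh Y))
    (hρ : ∀ x : R, ρ x = e.inv ≫ (tilde ⋙ fstar).map (mulMap R x) ≫ e.hom)
    (halg : ∀ a : ℤ, ρ (algebraMap ℤ R a) =
      a • 𝟙 (⟨SheafOfModules.unit Y.ringCatSheaf, hO⟩ : QCoh Y))
    (T : ModuleCat.{u} Rᵐᵒᵖ ⥤ QCoh Y)
    (adj : T ⊣ homFunctor
      (⟨⟨SheafOfModules.unit Y.ringCatSheaf, hO⟩, ρ, halg⟩ : LMod ℤ R (QCoh Y))) :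
    Nonempty ((tilde ⋙ fstar) ≅ T) :=
  ⟨(wattsIso (tilde ⋙ fstar) e hρ adj).symm⟩
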